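/- Let m be an odd positive integer and write u = a + 2b with a ∈ T⋆ = T∖{0,1} and b ∈ T. Then Σ_{a∈T⋆} Σ_{b∈T} S₊(u) = 2^{m+1}(2^m − 2) and Σ_{a∈T⋆} Σ_{b∈T} S₋(u) = 0. -/

import Mathlib

open Finset
open scoped Classical

/-- `i^a` for `a ∈ ℤ/4ℤ`; well defined since `i` has order 4. -/
noncomputable def zi (a : ZMod 4) : ℂ := Complex.I ^ a.val

/-- The exponential sum `S₊(u) = Σ_{x∈T} i^{Tr(ux)} + Σ_{x∈T} i^{3·Tr(ux)}`. -/
noncomputable def Splus {R : Type*} [CommRing R] (T : Finset R) (Tr : R → ZMod 4) (u : R) : ℂ :=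
  (∑ x ∈ T, zi (Tr (u * x))) + ∑ x ∈ T, zi (3 * Tr (u * x))

/-- The exponential sum `S₋(u) = Σ_{x∈T} i^{Tr(ux)} - Σ_{x∈T} i^{3·Tr(ux)}`. -/
noncomputable def Sminus {R : Type*} [CommRing R] (T : Finset R) (Tr : R → ZMod 4) (u : R) : ℂ :=
  (∑ x ∈ T, zi (Tr (u * x))) - ∑ x ∈ T, zi (3 * Tr (u * x))

/-!
Write `u = a + 2b` with `a, b ∈ T`. For `x ∈ T` one has `Tr(ux) = Tr(ax) + Tr(2bx)`, and
`Tr(2bx)` is `2`-torsion, so `3·Tr(2bx) = Tr(2bx)`. Hence for `c ∈ {1, 3}` the double sum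
`Σ_b Σ_x i^{c·Tr(ux)}` factors as `Σ_x i^{c·Tr(ax)} · Σ_b i^{Tr(2bx)}`. Reduction modulo `2`
maps `T` bijectively onto the residue field `𝔽_{2^m}` and turns `b ↦ i^{Tr(2b)}` into an
additive character of it, nontrivial because `Σ_{j<m} X^{2^j}` has degree `2^{m-1} < 2^m`.
So the inner sum vanishes unless `x = 0`, each double sum equals `2^m` whatever `a` is, and
summing over the `2^m - 2` elements of `T⋆` gives both identities.
-/

lemma zi_zero : zi 0 = 1 := AddChar.map_zero_eq_one (AddChar.zmodChar 4 Complex.I_pow_four)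

lemma zi_add (a b : ZMod 4) : zi (a + b) = zi a * zi b :=
  AddChar.map_add_eq_mul (AddChar.zmodChar 4 Complex.I_pow_four) a b

lemma two_ne_zero_of_charP_four (R : Type*) [AddMonoidWithOne R] [CharP R 4] : (2 : R) ≠ 0 := by
  exact_mod_cast (CharP.cast_eq_zero_iff R 4 2).not.2 (by decide)

section CharFour

variable {R : Type*} [CommRing R]

lemma two_mul_two_mul_pow_eq_zero (h4 : (4 : R) = 0) (x : R) {n : ℕ} (hn : n ≠ 0) :
    2 * (2 * x) ^ n = 0 := by
  obtain ⟨k, rfl⟩ := Nat.exists_eq_add_one_of_ne_zero hn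
  linear_combination (x * (2 * x) ^ k) * h4

lemma add_two_mul_pow_two_pow (h4 : (4 : R) = 0) (w t : R) {j : ℕ} (hj : j ≠ 0) :
    (w + 2 * t) ^ 2 ^ j = w ^ 2 ^ j := by
  obtain ⟨k, rfl⟩ := Nat.exists_eq_add_one_of_ne_zero hj
  have hsq : (w + 2 * t) ^ 2 = w ^ 2 := by linear_combination (w * t + t ^ 2) * h4
  rw [pow_succ', pow_mul, hsq, ← pow_mul]

lemma two_mul_add_pow_two_pow (h4 : (4 : R) = 0) (u v : R) (j : ℕ) :
    2 * (u + v) ^ 2 ^ j = 2 * u ^ 2 ^ j + 2 * v ^ 2 ^ j := by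
  induction j generalizing u v with
  | zero => ring
  | succ j ih =>
    have hsq : (u + v) ^ 2 = u ^ 2 + v ^ 2 + 2 * (u * v) := by ring
    rw [pow_succ', pow_mul, hsq, ih, ih, two_mul_two_mul_pow_eq_zero h4 _ (by positivity),
      ← pow_mul, ← pow_mul, add_zero]

lemma two_mul_add_two_mul_pow_two_pow (h4 : (4 : R) = 0) (w t : R) (j : ℕ) :
    2 * (w + 2 * t) ^ 2 ^ j = 2 * w ^ 2 ^ j := by
  rw [two_mul_add_pow_two_pow h4, two_mul_two_mul_pow_eq_zero h4 _ (by positivity), add_zero]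

end CharFour

lemma exists_sum_pow_pow_ne_zero {K : Type*} [Field K] [Finite K] {p m : ℕ} (hp : 1 < p)
    (hm : m ≠ 0) (hK : Nat.card K = p ^ m) : ∃ α : K, ∑ j ∈ range m, α ^ p ^ j ≠ 0 := by
  let P : Polynomial K := ∑ j ∈ range m, Polynomial.X ^ p ^ j
  have hP : P ≠ 0 := by
    have hcoeff : P.coeff 1 = 1 := by
      simp [P, Polynomial.coeff_X_pow, eq_comm (a := 1), hp.ne', Nat.pos_of_ne_zero hm]
    rintro h
    simp [h] at hcoeff
  have hdeg : P.natDegree < p ^ m := by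
    refine lt_of_le_of_lt (Polynomial.natDegree_sum_le_of_forall_le _ _ (n := p ^ (m - 1)) ?_)
      (Nat.pow_lt_pow_right hp (by omega))
    intro j hj
    rw [Polynomial.natDegree_X_pow]
    exact Nat.pow_le_pow_right (by omega) (by simp at hj; omega)
  obtain ⟨α, hα⟩ := P.exists_eval_ne_zero_of_natDegree_lt_card hP (by
    rw [← Nat.cast_card, hK]; exact_mod_cast hdeg)
  exact ⟨α, by simpa [P, Polynomial.eval_finsetSum] using hα⟩

open IsLocalRing

structure IsGaloisRingCharFour (R : Type*) [CommRing R] [CharP R 4] [IsLocalRing R] (m : ℕ) :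
    Prop where
  maximalIdeal_eq : maximalIdeal R = Ideal.span {2}
  card_eq : Nat.card R = 4 ^ m

namespace IsGaloisRingCharFour

variable {R : Type*} [CommRing R] [CharP R 4] [IsLocalRing R] {m : ℕ}

lemma finite (hR : IsGaloisRingCharFour R m) : Finite R :=
  Nat.finite_of_card_ne_zero (by simp [hR.card_eq])

lemma ne_zero (hR : IsGaloisRingCharFour R m) : m ≠ 0 := by
  rintro rfl
  have := hR.finite
  have := CharP.nontrivial_of_char_ne_one (R := R) (by decide : 4 ≠ 1)
  simpa [hR.card_eq] using Finite.one_lt_card (α := R)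

lemma residue_eq_zero_iff (hR : IsGaloisRingCharFour R m) {r : R} :
    residue R r = 0 ↔ 2 ∣ r := by
  rw [IsLocalRing.residue_eq_zero_iff, hR.maximalIdeal_eq, Ideal.mem_span_singleton]

lemma residue_eq_residue_iff (hR : IsGaloisRingCharFour R m) {x y : R} :
    residue R x = residue R y ↔ 2 ∣ x - y := by
  rw [← sub_eq_zero, ← map_sub, hR.residue_eq_zero_iff]

lemma two_dvd_of_two_mul_eq_zero (hR : IsGaloisRingCharFour R m) {r : R} (h : 2 * r = 0) :
    2 ∣ r := by
  rw [← hR.residue_eq_zero_iff]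
  by_contra hr
  exact two_ne_zero_of_charP_four R (((residue_ne_zero_iff_isUnit r).1 hr).mul_left_eq_zero.1 h)

lemma card_residueField (hR : IsGaloisRingCharFour R m) :
    Nat.card (ResidueField R) = 2 ^ m := by
  -- multiplication by `2` has kernel and image `(2)`, so `|R| = |(2)| · |R/(2)| = |R/(2)|²`
  let double := LinearMap.toSpanSingleton R R (2 : R)
  have hker : LinearMap.ker double = maximalIdeal R := by
    ext r
    simp only [double, LinearMap.mem_ker, LinearMap.toSpanSingleton_apply, smul_eq_mul,
      hR.maximalIdeal_eq, Ideal.mem_span_singleton]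
    refine ⟨fun h => hR.two_dvd_of_two_mul_eq_zero (by rwa [mul_comm]), ?_⟩
    rintro ⟨s, rfl⟩
    linear_combination s * CharP.ofNat_eq_zero R 4
  have hrange : LinearMap.range double = maximalIdeal R := by
    rw [hR.maximalIdeal_eq]
    exact (LinearMap.span_singleton_eq_range R R 2).symm
  have hquot : Nat.card (ResidueField R) = Nat.card (maximalIdeal R) := by
    rw [← hrange]
    exact Nat.card_congr
      ((Submodule.quotEquivOfEq _ _ hker.symm).trans double.quotKerEquivRange).toEquiv
  have hsq : Nat.card (ResidueField R) ^ 2 = (2 ^ m) ^ 2 := calc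
    _ = Nat.card (maximalIdeal R) * Nat.card (ResidueField R) := by rw [sq, hquot]
    _ = 4 ^ m := by
      rw [← hR.card_eq, Submodule.card_eq_card_quotient_mul_card (maximalIdeal R)]; rfl
    _ = (2 ^ m) ^ 2 := by rw [← pow_mul, mul_comm, pow_mul]; norm_num
  exact Nat.pow_left_injective two_ne_zero hsq

lemma finite_residueField (hR : IsGaloisRingCharFour R m) : Finite (ResidueField R) :=
  have := hR.finite
  Finite.of_surjective _ residue_surjective

lemma pow_two_pow_residueField (hR : IsGaloisRingCharFour R m) (α : ResidueField R) :
    α ^ 2 ^ m = α := by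
  have := hR.finite_residueField
  have := Fintype.ofFinite (ResidueField R)
  rw [← hR.card_residueField, Nat.card_eq_fintype_card]
  exact FiniteField.pow_card α

lemma eq_of_residue_eq (hR : IsGaloisRingCharFour R m) {x y : R} (hx : x ^ 2 ^ m = x)
    (hy : y ^ 2 ^ m = y) (h : residue R x = residue R y) : x = y := by
  obtain ⟨t, ht⟩ := hR.residue_eq_residue_iff.1 h
  rw [← hx, ← hy, show x = y + 2 * t by linear_combination ht,
    add_two_mul_pow_two_pow (CharP.ofNat_eq_zero R 4) _ _ hR.ne_zero]

lemma exists_pow_two_pow_eq_self_residue_eq (hR : IsGaloisRingCharFour R m)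
    (α : ResidueField R) : ∃ x : R, x ^ 2 ^ m = x ∧ residue R x = α := by
  obtain ⟨r, rfl⟩ := residue_surjective α
  have hres : residue R (r ^ 2 ^ m) = residue R r := by
    rw [map_pow, hR.pow_two_pow_residueField]
  obtain ⟨t, ht⟩ := hR.residue_eq_residue_iff.1 hres
  refine ⟨r ^ 2 ^ m, ?_, hres⟩
  calc (r ^ 2 ^ m) ^ 2 ^ m = (r + 2 * t) ^ 2 ^ m := by rw [← sub_eq_iff_eq_add'.1 ht]
    _ = r ^ 2 ^ m := add_two_mul_pow_two_pow (CharP.ofNat_eq_zero R 4) _ _ hR.ne_zero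

variable {T : Finset R}

lemma bijOn_residue (hR : IsGaloisRingCharFour R m) (hT : ∀ z, z ∈ T ↔ z ^ 2 ^ m = z) :
    Set.BijOn (residue R) T Set.univ := by
  refine ⟨Set.mapsTo_univ _ _, fun x hx y hy h => ?_, fun α _ => ?_⟩
  · exact hR.eq_of_residue_eq ((hT x).1 hx) ((hT y).1 hy) h
  · obtain ⟨x, hx, rfl⟩ := hR.exists_pow_two_pow_eq_self_residue_eq α
    exact ⟨x, (hT x).2 hx, rfl⟩

lemma sum_residue_eq_sum (hR : IsGaloisRingCharFour R m) (hT : ∀ z, z ∈ T ↔ z ^ 2 ^ m = z)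
    [Fintype (ResidueField R)] {M : Type*} [AddCommMonoid M] (f : ResidueField R → M) :
    ∑ b ∈ T, f (residue R b) = ∑ α, f α :=
  sum_nbij _ (fun _ _ => mem_univ _) (hR.bijOn_residue hT).injOn
    (by simpa using (hR.bijOn_residue hT).surjOn) fun _ _ => rfl

lemma card_teichmuller (hR : IsGaloisRingCharFour R m) (hT : ∀ z, z ∈ T ↔ z ^ 2 ^ m = z) :
    T.card = 2 ^ m := by
  have := hR.finite_residueField
  have := Fintype.ofFinite (ResidueField R)
  rw [← hR.card_residueField, Nat.card_eq_fintype_card, card_eq_sum_ones,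
    Fintype.card_eq_sum_ones]
  exact hR.sum_residue_eq_sum hT fun _ => 1

end IsGaloisRingCharFour

def IsTeichmullerTrace {R : Type*} [CommRing R] [CharP R 4] (m : ℕ) (T : Finset R)
    (Tr : R → ZMod 4) : Prop :=
  ∀ x ∈ T, ∀ y ∈ T, ZMod.castHom (dvd_refl 4) R (Tr (x + 2 * y)) =
    ∑ j ∈ range m, (x ^ 2 ^ j + 2 * y ^ 2 ^ j)

namespace IsTeichmullerTrace

variable {R : Type*} [CommRing R] [CharP R 4] {m : ℕ} {T : Finset R} {Tr : R → ZMod 4}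

lemma castHom_trace (hTr : IsTeichmullerTrace m T Tr) (hT0 : (0 : R) ∈ T) {x : R} (hx : x ∈ T) :
    ZMod.castHom (dvd_refl 4) R (Tr x) = ∑ j ∈ range m, x ^ 2 ^ j := by
  simpa using hTr x hx 0 hT0

lemma castHom_trace_two_mul (hTr : IsTeichmullerTrace m T Tr) (hT0 : (0 : R) ∈ T) {y : R}
    (hy : y ∈ T) :
    ZMod.castHom (dvd_refl 4) R (Tr (2 * y)) = 2 * ∑ j ∈ range m, y ^ 2 ^ j := by
  simpa [mul_sum] using hTr 0 hT0 y hy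

lemma trace_zero (hTr : IsTeichmullerTrace m T Tr) (hT0 : (0 : R) ∈ T) : Tr 0 = 0 :=
  ZMod.castHom_injective R (by simpa using hTr.castHom_trace hT0 hT0)

lemma trace_add_two_mul (hTr : IsTeichmullerTrace m T Tr) (hT0 : (0 : R) ∈ T) {x y : R}
    (hx : x ∈ T) (hy : y ∈ T) : Tr (x + 2 * y) = Tr x + Tr (2 * y) :=
  ZMod.castHom_injective R <| by
    rw [map_add, hTr x hx y hy, hTr.castHom_trace hT0 hx, hTr.castHom_trace_two_mul hT0 hy,
      mul_sum, sum_add_distrib]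

lemma two_mul_trace_two_mul (hTr : IsTeichmullerTrace m T Tr) (hT0 : (0 : R) ∈ T) {y : R}
    (hy : y ∈ T) : 2 * Tr (2 * y) = 0 :=
  ZMod.castHom_injective R <| by
    rw [map_mul, hTr.castHom_trace_two_mul hT0 hy, map_ofNat, map_zero]
    linear_combination (∑ j ∈ range m, y ^ 2 ^ j) * CharP.ofNat_eq_zero R 4

end IsTeichmullerTrace

namespace IsGaloisRingCharFour

variable {R : Type*} [CommRing R] [CharP R 4] [IsLocalRing R] {m : ℕ} {T : Finset R}
  {Tr : R → ZMod 4}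

lemma exists_addMonoidHom_eq_trace_two_mul (hR : IsGaloisRingCharFour R m)
    (hT : ∀ z, z ∈ T ↔ z ^ 2 ^ m = z) (hTr : IsTeichmullerTrace m T Tr) :
    ∃ f : ResidueField R →+ ZMod 4, f ≠ 0 ∧ ∀ b ∈ T, f (residue R b) = Tr (2 * b) := by
  have h4 := CharP.ofNat_eq_zero R 4
  have hT0 : (0 : R) ∈ T := (hT 0).2 (by simp)
  choose ω hωT hω using fun α => (hR.bijOn_residue hT).surjOn (Set.mem_univ α)
  have hadd (α β) : Tr (2 * ω (α + β)) = Tr (2 * ω α) + Tr (2 * ω β) := by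
    obtain ⟨t, ht⟩ := hR.residue_eq_residue_iff.1
      (show residue R (ω (α + β)) = residue R (ω α + ω β) by rw [map_add, hω, hω, hω])
    refine ZMod.castHom_injective R ?_
    simp only [map_add, hTr.castHom_trace_two_mul hT0 (hωT _), mul_sum, ← sum_add_distrib]
    rw [sub_eq_iff_eq_add'.1 ht]
    simp only [two_mul_add_two_mul_pow_two_pow h4, two_mul_add_pow_two_pow h4]
  refine ⟨AddMonoidHom.mk' (fun α => Tr (2 * ω α)) hadd, fun hf => ?_, fun b hb => ?_⟩
  · have := hR.finite_residueField
    obtain ⟨α, hα⟩ := exists_sum_pow_pow_ne_zero one_lt_two hR.ne_zero hR.card_residueField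
    have h2 : 2 * ∑ j ∈ range m, ω α ^ 2 ^ j = 0 := by
      rw [← hTr.castHom_trace_two_mul hT0 (hωT α),
        show Tr (2 * ω α) = 0 from DFunLike.congr_fun hf α, map_zero]
    exact hα (by simpa [hω] using hR.residue_eq_zero_iff.2 (hR.two_dvd_of_two_mul_eq_zero h2))
  · show Tr (2 * ω (residue R b)) = Tr (2 * b)
    rw [hR.eq_of_residue_eq ((hT _).1 (hωT _)) ((hT b).1 hb) (hω _)]

lemma sum_zi_trace_two_mul_mul (hR : IsGaloisRingCharFour R m)
    (hT : ∀ z, z ∈ T ↔ z ^ 2 ^ m = z) (hTr : IsTeichmullerTrace m T Tr) {x : R}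
    (hx : x ∈ T) :
    ∑ b ∈ T, zi (Tr (2 * (b * x))) = if x = 0 then (2 : ℂ) ^ m else 0 := by
  have := hR.finite_residueField
  have := Fintype.ofFinite (ResidueField R)
  obtain ⟨f, hf0, hf⟩ := hR.exists_addMonoidHom_eq_trace_two_mul hT hTr
  let ψ := (AddChar.zmodChar 4 Complex.I_pow_four).compAddMonoidHom f
  have hψ : ψ.IsPrimitive := by
    refine AddChar.IsPrimitive.of_ne_one fun h => hf0 ?_
    ext α
    have hprim := AddChar.zmodChar_primitive_of_primitive_root 4 Complex.isPrimitiveRoot_I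
    exact (hprim.zmod_char_eq_one_iff 4 (f α)).1 (DFunLike.congr_fun h α)
  have hψT (b) (hb : b ∈ T) : zi (Tr (2 * (b * x))) = ψ (residue R b * residue R x) := by
    rw [← map_mul, ← hf _ ((hT _).2 (by rw [mul_pow, (hT b).1 hb, (hT x).1 hx]))]
    rfl
  have hx0 : residue R x = 0 ↔ x = 0 := by
    refine ⟨fun h => hR.eq_of_residue_eq ((hT x).1 hx) (by simp) (by simpa using h), ?_⟩
    rintro rfl
    exact map_zero _
  rw [sum_congr rfl hψT, hR.sum_residue_eq_sum hT fun α => ψ (α * residue R x),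
    AddChar.sum_mulShift _ hψ]
  simp [hx0, ← Nat.card_eq_fintype_card, hR.card_residueField]

lemma sum_sum_zi_mul_trace (hR : IsGaloisRingCharFour R m)
    (hT : ∀ z, z ∈ T ↔ z ^ 2 ^ m = z) (hTr : IsTeichmullerTrace m T Tr) {a : R} (ha : a ∈ T)
    {c : ZMod 4} (hc : c = 1 ∨ c = 3) :
    ∑ b ∈ T, ∑ x ∈ T, zi (c * Tr ((a + 2 * b) * x)) = 2 ^ m := by
  have hT0 : (0 : R) ∈ T := (hT 0).2 (by simp)
  have hmul {u v : R} (hu : u ∈ T) (hv : v ∈ T) : u * v ∈ T :=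
    (hT _).2 (by rw [mul_pow, (hT u).1 hu, (hT v).1 hv])
  have hterm (x) (hx : x ∈ T) (b) (hb : b ∈ T) :
      zi (c * Tr ((a + 2 * b) * x)) = zi (c * Tr (a * x)) * zi (Tr (2 * (b * x))) := by
    have h2 := hTr.two_mul_trace_two_mul hT0 (hmul hb hx)
    rw [add_mul, mul_assoc, hTr.trace_add_two_mul hT0 (hmul ha hx) (hmul hb hx), mul_add, zi_add]
    rcases hc with rfl | rfl
    · rw [one_mul, one_mul]
    · congr 2
      linear_combination h2
  calc ∑ b ∈ T, ∑ x ∈ T, zi (c * Tr ((a + 2 * b) * x))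
      = ∑ x ∈ T, zi (c * Tr (a * x)) * ∑ b ∈ T, zi (Tr (2 * (b * x))) := by
        rw [sum_comm]
        exact sum_congr rfl fun x hx => by rw [mul_sum]; exact sum_congr rfl (hterm x hx)
    _ = ∑ x ∈ T, if x = 0 then zi (c * Tr (a * x)) * 2 ^ m else 0 :=
        sum_congr rfl fun x hx => by rw [hR.sum_zi_trace_two_mul_mul hT hTr hx, mul_ite, mul_zero]
    _ = 2 ^ m := by
        rw [sum_ite_eq' T 0, if_pos hT0, mul_zero, hTr.trace_zero hT0, mul_zero, zi_zero, one_mul]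

end IsGaloisRingCharFour

theorem stmt_2_general (m : ℕ)
    (R : Type*) [CommRing R] [Fintype R] [DecidableEq R]
    -- `R` is the Galois ring GR(4,m): the finite local commutative ring of
    -- characteristic 4 and cardinality 4^m whose maximal ideal is (2)
    [CharP R 4] [IsLocalRing R]
    (hcard : Fintype.card R = 4 ^ m)
    (hmax : IsLocalRing.maximalIdeal R = Ideal.span {2})
    -- `T` is the Teichmüller set of `R`
    (T : Finset R) (hT : ∀ z : R, z ∈ T ↔ z ^ 2 ^ m = z)
    -- `Tr` is the trace function from `R` to `ℤ/4ℤ`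
    (Tr : R → ZMod 4)
    (hTr : ∀ x ∈ T, ∀ y ∈ T,
      (ZMod.castHom (dvd_refl 4) R) (Tr (x + 2 * y)) =
        ∑ j ∈ Finset.range m, (x ^ 2 ^ j + 2 * y ^ 2 ^ j)) :
    (∑ a ∈ T \ {0, 1}, ∑ b ∈ T, Splus T Tr (a + 2 * b)) = 2 ^ (m + 1) * (2 ^ m - 2) ∧
    (∑ a ∈ T \ {0, 1}, ∑ b ∈ T, Sminus T Tr (a + 2 * b)) = 0 := by
  have hR : IsGaloisRingCharFour R m := ⟨hmax, by rw [Nat.card_eq_fintype_card, hcard]⟩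
  have h1 (a) (ha : a ∈ T \ {0, 1}) :
      ∑ b ∈ T, ∑ x ∈ T, zi (Tr ((a + 2 * b) * x)) = 2 ^ m := by
    simpa using hR.sum_sum_zi_mul_trace hT hTr (mem_sdiff.1 ha).1 (.inl rfl)
  have h3 (a) (ha : a ∈ T \ {0, 1}) :
      ∑ b ∈ T, ∑ x ∈ T, zi (3 * Tr ((a + 2 * b) * x)) = 2 ^ m :=
    hR.sum_sum_zi_mul_trace hT hTr (mem_sdiff.1 ha).1 (.inr rfl)
  have hcard' : ((T \ {0, 1}).card : ℂ) = 2 ^ m - 2 := by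
    have h01 : {0, 1} ⊆ T := by simp [insert_subset_iff, hT]
    rw [card_sdiff_of_subset h01, hR.card_teichmuller hT, card_pair zero_ne_one,
      Nat.cast_sub (Nat.le_self_pow hR.ne_zero 2)]
    norm_num
  refine ⟨?_, ?_⟩
  · simp only [Splus, sum_add_distrib]
    rw [sum_congr rfl h1, sum_congr rfl h3, sum_const, nsmul_eq_mul, hcard']
    ring
  · simp only [Sminus, sum_sub_distrib]
    rw [sum_congr rfl h1, sum_congr rfl h3, sub_self]

theorem stmt_2 (m : ℕ) (hm : Odd m)
    (R : Type*) [CommRing R] [Fintype R] [DecidableEq R]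
    -- `R` is the Galois ring GR(4,m): the finite local commutative ring of
    -- characteristic 4 and cardinality 4^m whose maximal ideal is (2)
    [CharP R 4] [IsLocalRing R]
    (hcard : Fintype.card R = 4 ^ m)
    (hmax : IsLocalRing.maximalIdeal R = Ideal.span {2})
    -- `T` is the Teichmüller set of `R`
    (T : Finset R) (hT : ∀ z : R, z ∈ T ↔ z ^ 2 ^ m = z)
    -- `Tr` is the trace function from `R` to `ℤ/4ℤ`
    (Tr : R → ZMod 4)
    (hTr : ∀ x ∈ T, ∀ y ∈ T,
      (ZMod.castHom (dvd_refl 4) R) (Tr (x + 2 * y)) =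
        ∑ j ∈ Finset.range m, (x ^ 2 ^ j + 2 * y ^ 2 ^ j)) :
    (∑ a ∈ T \ {0, 1}, ∑ b ∈ T, Splus T Tr (a + 2 * b)) = 2 ^ (m + 1) * (2 ^ m - 2) ∧
    (∑ a ∈ T \ {0, 1}, ∑ b ∈ T, Sminus T Tr (a + 2 * b)) = 0 :=
  stmt_2_general m R hcard hmax T hT Tr hTr
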